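/- Let ρ be a partial resolution of a connected ribbon graph Γ that is not split, and let e be an unresolved edge. Then e is nugatory (one of ρ resolved at e to 0 or to 1 is split) if and only if Γ₀(ρ,e) or Γ₁(ρ,e) is disconnected; moreover if Γ₀(ρ,e) is disconnected then |γ_{ρ₁}| = |γ_ρ| − 1 and |γ_{ρ₀}| = |γ_ρ|, while if Γ₁(ρ,e) is disconnected then |γ_{ρ₀}| = |γ_ρ| and |γ_{ρ₁}| = |γ_ρ| + 1. -/

import Mathlib

open Equiv

noncomputable section

/-- Number of orbits of the map `f` on `α` (the equivalence generated by `i ~ f i`). -/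
def orbCountOf {α : Type*} (f : α → α) : ℕ :=
  Nat.card (Quot (fun i j : α => j = f i))

/-- `x` lies on the arc of the cycle of `f` starting at `a` strictly before reaching `b`. -/
def ReachesBefore {α : Type*} (f : α → α) (a x b : α) : Prop :=
  ∃ m : ℕ, f^[m] a = x ∧ ∀ k ≤ m, f^[k] a ≠ b

/-- The chords `{a,b}` and `{c,d}` of the cycle parametrized by `f` intersect:
exactly one of `c`, `d` lies on the arc from `a` to `b`. -/
def ChordsCross {α : Type*} (f : α → α) (a b c d : α) : Prop :=
  ¬ (ReachesBefore f a c b ↔ ReachesBefore f a d b)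

/-- A combinatorial oriented ribbon graph on `2 * n` half-edges, given by a vertex
permutation `σ0` and a fixed-point free involution `σ1` pairing the half-edges
into edges.  Vertices, edges and faces are the orbits of `σ0`, `σ1`, `σ2 = (σ0 σ1)⁻¹`. -/
structure RibbonGraph (n : ℕ) where
  σ0 : Perm (Fin (2 * n))
  σ1 : Perm (Fin (2 * n))
  invol : σ1 * σ1 = 1
  fixfree : ∀ i, σ1 i ≠ i

namespace RibbonGraph

variable {n : ℕ} (Γ : RibbonGraph n)

/-- The face permutation `σ2 = (σ0 σ1)⁻¹`, so that `σ0 σ1 σ2 = 1`. -/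
def σ2 : Perm (Fin (2 * n)) := (Γ.σ0 * Γ.σ1)⁻¹

/-- `Γ` is connected iff the group generated by `σ0, σ1` acts transitively on half-edges. -/
def Connected : Prop :=
  ∀ i j : Fin (2 * n), ∃ g ∈ Subgroup.closure {Γ.σ0, Γ.σ1}, g i = j

/-- A set `A` of half-edges determines a spanning ribbon subgraph iff it is closed
under the edge involution `σ1`. -/
def Closed (A : Finset (Fin (2 * n))) : Prop := ∀ i ∈ A, Γ.σ1 i ∈ A

/-- The number of vertices (orbits of `σ0`). -/
def vCount : ℕ := orbCountOf Γ.σ0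

/-- The number of edges of the spanning subgraph with half-edge set `A`. -/
def eCount (_Γ : RibbonGraph n) (A : Finset (Fin (2 * n))) : ℕ := A.card / 2

/-- Relation whose equivalence classes are the connected components of the spanning
subgraph with half-edge set `A`. -/
def compRel (A : Finset (Fin (2 * n))) (i j : Fin (2 * n)) : Prop :=
  j = Γ.σ0 i ∨ (i ∈ A ∧ j = Γ.σ1 i)

/-- The number of connected components of the spanning subgraph `A`. -/
def kComp (A : Finset (Fin (2 * n))) : ℕ := Nat.card (Quot (Γ.compRel A))

/-- The boundary map of a regular neighborhood of the spanning subgraph `A` on the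
surface of `Γ`: it is `σ0` on half-edges not in `A`, and `σ2⁻¹ = σ0 σ1` on half-edges
in `A`.  Its orbits are the boundary components (faces) of `A`. -/
def bdryMap (A : Finset (Fin (2 * n))) : Fin (2 * n) → Fin (2 * n) :=
  fun i => if i ∈ A then Γ.σ0 (Γ.σ1 i) else Γ.σ0 i

/-- The number of faces (boundary components `|γ_A|`) of the spanning subgraph `A`. -/
def faces (A : Finset (Fin (2 * n))) : ℕ := orbCountOf (Γ.bdryMap A)

/-- The nullity `n(A) = e(A) - v(Γ) + k(A)` of the spanning subgraph `A`. -/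
def nullity (A : Finset (Fin (2 * n))) : ℤ := (Γ.eCount A : ℤ) + Γ.kComp A - Γ.vCount

/-- Twice the genus of the spanning subgraph `A`:
`2 g(A) = 2 k(A) - v(Γ) + e(A) - f(A)`. -/
def twoGenus (A : Finset (Fin (2 * n))) : ℤ :=
  2 * (Γ.kComp A : ℤ) - Γ.vCount + Γ.eCount A - Γ.faces A

/-- The nullity of `A`, as a natural number. -/
def nullNat (A : Finset (Fin (2 * n))) : ℕ := Γ.eCount A + Γ.kComp A - Γ.vCount

/-- The genus of `A`, as a natural number. -/
def genusNat (A : Finset (Fin (2 * n))) : ℕ :=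
  (2 * Γ.kComp A + Γ.eCount A - Γ.vCount - Γ.faces A) / 2

/-- A quasi-tree: a connected spanning ribbon subgraph with exactly one face. -/
def IsQuasiTree (A : Finset (Fin (2 * n))) : Prop :=
  Γ.Closed A ∧ Γ.kComp A = 1 ∧ Γ.faces A = 1

/-- The order of the edge of the half-edge `i`: the minimum of its two half-edge labels. -/
def edgeOrd (i : Fin (2 * n)) : ℕ := min i.1 (Γ.σ1 i).1

/-- The chords of the edges of `i` and `j` intersect in the ordered chord diagram `C_A`
of the boundary curve `γ_A`. -/
def Crosses (A : Finset (Fin (2 * n))) (i j : Fin (2 * n)) : Prop :=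
  ChordsCross (Γ.bdryMap A) i (Γ.σ1 i) j (Γ.σ1 j)

/-- The edge of `i` is live with respect to the quasi-tree `A`: its chord in `C_A`
intersects no lower-ordered chord. -/
def Live (A : Finset (Fin (2 * n))) (i : Fin (2 * n)) : Prop :=
  ∀ j : Fin (2 * n), Γ.edgeOrd j < Γ.edgeOrd i → ¬ Γ.Crosses A i j

open scoped Classical in
/-- The half-edge set `D(A)` of the internally dead edges of the quasi-tree `A`. -/
noncomputable def deadIn (A : Finset (Fin (2 * n))) : Finset (Fin (2 * n)) :=
  A.filter (fun i => ¬ Γ.Live A i)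

open scoped Classical in
/-- The number of externally live edges `|E(A)|` of the quasi-tree `A`. -/
noncomputable def extLiveCount (A : Finset (Fin (2 * n))) : ℕ :=
  (Finset.univ.filter (fun i => i ∉ A ∧ Γ.Live A i)).card / 2

open scoped Classical in
/-- The number of internally live edges `|I(A)|` of the quasi-tree `A`. -/
noncomputable def intLiveCount (A : Finset (Fin (2 * n))) : ℕ :=
  (A.filter (fun i => Γ.Live A i)).card / 2

open scoped Classical in
/-- The Bollobás–Riordan polynomial of `Γ`, via its spanning subgraph expansion
`C(Γ) = Σ_H (X-1)^(k(H)-1) Y^(n(H)) Z^(g(H))`. -/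
noncomputable def BR (X Y Z : ℚ) : ℚ :=
  ∑ A ∈ Finset.univ.filter (fun A : Finset (Fin (2 * n)) => Γ.Closed A),
    (X - 1) ^ (Γ.kComp A - 1) * Y ^ Γ.nullNat A * Z ^ Γ.genusNat A

open scoped Classical in
/-- The set of quasi-trees of `Γ`. -/
noncomputable def quasiTrees : Finset (Finset (Fin (2 * n))) :=
  Finset.univ.filter (fun A => Γ.IsQuasiTree A)

open scoped Classical in
/-- The Tutte polynomial of the graph `G_A` (vertices: the components of `D(A)`;
edges: the internally live edges of `A`), via its spanning subgraph expansion
`T(x,y) = Σ_W (x-1)^(k(W)-1) (y-1)^(n(W))`.  A spanning subgraph `W` of `G_A`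
corresponds to a `σ1`-closed set `S` of internally live half-edges; then
`k(W) = k(D ∪ S)` and `n(W) = k(D ∪ S) + e(S) - k(D)`. -/
noncomputable def TutteGQ (A : Finset (Fin (2 * n))) (x y : ℚ) : ℚ :=
  ∑ S ∈ (A.filter (fun i => Γ.Live A i)).powerset.filter (fun S => Γ.Closed S),
    (x - 1) ^ (Γ.kComp (Γ.deadIn A ∪ S) - 1) *
      (y - 1) ^ (Γ.kComp (Γ.deadIn A ∪ S) + Γ.eCount S - Γ.kComp (Γ.deadIn A))

/-- A partial resolution assigns `some true` / `some false` / `none` ( `*` )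
to half-edges; it should be constant on edges. -/
def EdgeConst (ρ : Fin (2 * n) → Option Bool) : Prop := ∀ i, ρ (Γ.σ1 i) = ρ i

open scoped Classical in
/-- The half-edge set `H_ρ` of the partial resolution `ρ`. -/
noncomputable def Hset (_Γ : RibbonGraph n) (ρ : Fin (2 * n) → Option Bool) : Finset (Fin (2 * n)) :=
  Finset.univ.filter (fun i => ρ i = some true)

/-- `ρ` is split: `f(H_ρ ∪ U) > 1` for every (σ1-closed) set `U` of unresolved edges. -/
def Split (ρ : Fin (2 * n) → Option Bool) : Prop :=
  ∀ U : Finset (Fin (2 * n)), (∀ i ∈ U, ρ i = none) → (∀ i ∈ U, Γ.σ1 i ∈ U) →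
    1 < Γ.faces (Γ.Hset ρ ∪ U)

/-- Resolve the edge of `e` in `ρ` to the value `b`. -/
def resolveEdge (ρ : Fin (2 * n) → Option Bool) (e : Fin (2 * n)) (b : Bool) :
    Fin (2 * n) → Option Bool :=
  fun i => if i = e ∨ i = Γ.σ1 e then some b else ρ i

/-- The unresolved edge `e` is nugatory in `ρ`: one of its two resolutions is split. -/
def Nugatory (ρ : Fin (2 * n) → Option Bool) (e : Fin (2 * n)) : Prop :=
  Γ.Split (Γ.resolveEdge ρ e false) ∨ Γ.Split (Γ.resolveEdge ρ e true)

/-- `Γ(ρ) = γ_ρ ∪ Int(ρ⁻¹(*))` is connected: the boundary components of `H_ρ`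
together with the unresolved edges connect all half-edges. -/
def GammaConn (ρ : Fin (2 * n) → Option Bool) : Prop :=
  ∀ i j : Fin (2 * n),
    Relation.EqvGen
      (fun x y => y = Γ.bdryMap (Γ.Hset ρ) x ∨ (ρ x = none ∧ y = Γ.σ1 x)) i j

/-- The partial resolution seen at the moment the edge of `e` is considered in the
resolution process: edges of higher order keep their value, the rest are unresolved. -/
def restrictAbove (ρ : Fin (2 * n) → Option Bool) (e : Fin (2 * n)) :
    Fin (2 * n) → Option Bool :=
  fun j => if Γ.edgeOrd e < Γ.edgeOrd j then ρ j else none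

/-- `ρ` is a leaf of the binary resolution tree `𝒯`: edges are resolved in decreasing
order, an edge is left unresolved exactly when it is nugatory at its turn. -/
def IsLeaf (ρ : Fin (2 * n) → Option Bool) : Prop :=
  Γ.EdgeConst ρ ∧
  (∀ i, ρ i = none → Γ.Nugatory (Γ.restrictAbove ρ i) i) ∧
  (∀ i, ρ i ≠ none → ¬ Γ.Nugatory (Γ.restrictAbove ρ i) i)

/-- The spanning subgraph `A` lies in the interval `[ρ]` of the Boolean lattice. -/
def MemInterval (_Γ : RibbonGraph n) (ρ : Fin (2 * n) → Option Bool) (A : Finset (Fin (2 * n))) : Prop :=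
  ∀ i, (ρ i = some true → i ∈ A) ∧ (ρ i = some false → i ∉ A)

/-- The pair of half-edges of the edge of `i`. -/
def edgePair (i : Fin (2 * n)) : Finset (Fin (2 * n)) := {i, Γ.σ1 i}

/-- For a spanning tree `A`, `j ∈ cut(A, i)` (equivalently `i ∈ cyc(A, j)`):
the edge of `j` reconnects `A` minus the edge of `i`. -/
def InCut (A : Finset (Fin (2 * n))) (i j : Fin (2 * n)) : Prop :=
  Γ.kComp ((A \ Γ.edgePair i) ∪ Γ.edgePair j) = 1

/-- Tutte's internal activity: `i ∈ A` is internally active iff it is the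
lowest-ordered edge of its cut `cut(A, i)`. -/
def TutteIntActive (A : Finset (Fin (2 * n))) (i : Fin (2 * n)) : Prop :=
  i ∈ A ∧ ∀ j, j ∉ A → Γ.InCut A i j → Γ.edgeOrd i < Γ.edgeOrd j

/-- Tutte's external activity: `j ∉ A` is externally active iff it is the
lowest-ordered edge of its cycle `cyc(A, j)`. -/
def TutteExtActive (A : Finset (Fin (2 * n))) (j : Fin (2 * n)) : Prop :=
  j ∉ A ∧ ∀ i ∈ A, Γ.InCut A i j → Γ.edgeOrd j < Γ.edgeOrd i

end RibbonGraph

end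

/-!
Let `f` be the boundary permutation of `H_ρ`, whose cycles are the components of `γ_ρ`.
Resolving the unresolved edge `{e, σ₁ e}` to `1` replaces `f` by `f * swap e (σ₁ e)`: this
splits the cycle through `e` into two if `e` and `σ₁ e` lie on the same cycle of `f`, and
merges the two cycles through them otherwise. In the first case `Γ₀(ρ,e)` stays connected
(the edge only joined points of one component of `γ_ρ`), in the second `Γ₁(ρ,e)` does (the
merged component contains both ends of the edge). Everything then follows from
`ρ` split ⟺ `Γ(ρ)` disconnected, whose harder direction resolves the unresolved edges one
at a time, always in the way that keeps `Γ(ρ)` connected, until a single boundary curve is left.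
-/

namespace Setoid

variable {α : Type*}

theorem card_quotient_eq_add_one [Finite α] {r s : Setoid α} (hrs : r ≤ s) {a b : α}
    (hab : ¬ r a b) (hsab : s a b) (hsplit : ∀ x, s a x → r a x ∨ r b x)
    (hrest : ∀ x y, ¬ s a x → s x y → r x y) :
    Nat.card (Quotient r) = Nat.card (Quotient s) + 1 := by
  classical
  let φ (x : α) : Option (Quotient s) := if r b x then none else some (Quotient.mk s x)
  have hφ : ∀ x y, r x y → φ x = φ y := fun x y hxy => by
    have hbxy : r b x ↔ r b y := ⟨fun h => r.trans h hxy, fun h => r.trans h (r.symm hxy)⟩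
    by_cases hx : r b x
    · simp [φ, hx, hbxy.1 hx]
    · simp only [φ, if_neg hx, if_neg (hbxy.not.1 hx)]
      exact congrArg some (Quotient.sound (hrs hxy))
  have hF : Function.Bijective (Quotient.lift φ hφ) := by
    constructor
    · intro p q
      induction p, q using Quotient.inductionOn₂ with | h x y => ?_
      intro hxy
      refine Quotient.sound ?_
      simp only [Quotient.lift_mk, φ] at hxy
      by_cases hx : r b x <;> by_cases hy : r b y <;>
        simp only [hx, hy, if_true, if_false, reduceCtorEq, Option.some.injEq] at hxy
      · exact r.trans (r.symm hx) hy
      · have hsxy : s x y := Quotient.exact hxy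
        by_cases hax : s a x
        · have hrax := (hsplit x hax).resolve_right hx
          have hray := (hsplit y (s.trans hax hsxy)).resolve_right hy
          exact r.trans (r.symm hrax) hray
        · exact hrest x y hax hsxy
    · intro o
      rcases o with _ | q
      · exact ⟨Quotient.mk r b, by simp [φ]⟩
      induction q using Quotient.inductionOn with | h x => ?_
      by_cases hx : r b x
      · refine ⟨Quotient.mk r a, ?_⟩
        have hba : ¬ r b a := fun h => hab (r.symm h)
        simp only [Quotient.lift_mk, φ, if_neg hba]
        exact congrArg some (Quotient.sound (s.trans hsab (hrs hx)))
      · exact ⟨Quotient.mk r x, by simp [φ, hx]⟩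
  rw [Nat.card_eq_of_bijective _ hF, Finite.card_option]

end Setoid

namespace Equiv.Perm

variable {α : Type*} {f g : Perm α} {a b x y : α}

theorem SameCycle.sameCycle_mul_swap_apply [DecidableEq α] (h : f.SameCycle a b) (x : α) :
    f.SameCycle x ((f * swap a b) x) := by
  rw [mul_apply]
  by_cases hxa : x = a
  · rw [hxa, swap_apply_left]
    exact sameCycle_apply_right.2 h
  by_cases hxb : x = b
  · rw [hxb, swap_apply_right]
    exact sameCycle_apply_right.2 h.symm
  rw [swap_apply_of_ne_of_ne hxa hxb]
  exact sameCycle_apply_right.2 .rfl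

variable [Finite α]

theorem SameCycle.of_forall_sameCycle_apply (hstep : ∀ z, f.SameCycle x z → g.SameCycle z (f z))
    (h : f.SameCycle x y) : g.SameCycle x y := by
  obtain ⟨k, rfl⟩ := h.exists_nat_pow_eq
  clear h
  induction k with
  | zero => exact .rfl
  | succ k ih =>
    rw [pow_succ', mul_apply]
    exact ih.trans (hstep _ (sameCycle_pow_right.2 .rfl))

theorem eqvGen_apply_iff_sameCycle :
    Relation.EqvGen (fun i j => j = f i) x y ↔ f.SameCycle x y := by
  refine ⟨fun h => ?_, fun h => ?_⟩
  · refine Setoid.eqvGen_le (s := SameCycle.setoid f) ?_ h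
    rintro i _ rfl
    exact sameCycle_apply_right.2 .rfl
  · obtain ⟨k, rfl⟩ := h.exists_nat_pow_eq
    clear h
    induction k with
    | zero => exact .refl x
    | succ k ih =>
      rw [pow_succ', mul_apply]
      exact .trans _ _ _ ih (.rel _ _ rfl)

theorem orbCountOf_eq_card_quotient (f : Perm α) :
    orbCountOf f = Nat.card (Quotient (SameCycle.setoid f)) := by
  refine Nat.card_eq_of_bijective
    (Quot.lift (Quotient.mk _) fun i _ h => Quotient.sound (h ▸ sameCycle_apply_right.2 .rfl))
    ⟨fun p q => ?_, fun q => Quotient.inductionOn q fun x => ⟨Quot.mk _ x, rfl⟩⟩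
  induction p using Quot.ind with | mk x => ?_
  induction q using Quot.ind with | mk y => ?_
  exact fun h => Quot.eqvGen_sound (eqvGen_apply_iff_sameCycle.2 (Quotient.exact h))

theorem orbCountOf_le_one_iff : orbCountOf f ≤ 1 ↔ ∀ x y, f.SameCycle x y := by
  rw [orbCountOf_eq_card_quotient, Finite.card_le_one_iff_subsingleton]
  exact ⟨fun _ x y => Quotient.exact (Subsingleton.elim (Quotient.mk (SameCycle.setoid f) x) _),
    fun h => ⟨Quotient.ind₂ fun x y => Quotient.sound (h x y)⟩⟩

variable [DecidableEq α]

theorem not_sameCycle_mul_swap (hab : a ≠ b) (h : f.SameCycle a b) :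
    ¬ (f * swap a b).SameCycle a b := by
  have hex : ∃ k, 0 < k ∧ (f ^ k) a = b := by
    obtain ⟨k, hk, -, hkb⟩ := h.exists_pow_eq''
    exact ⟨k, hk, hkb⟩
  obtain ⟨hk, hkb⟩ := Nat.find_spec hex
  set k := Nat.find hex
  have hne_b : ∀ i, 0 < i → i < k → (f ^ i) a ≠ b := fun i hi hik hib =>
    Nat.find_min hex hik ⟨hi, hib⟩
  have hne_a : ∀ i, 0 < i → i ≤ k → (f ^ i) a ≠ a := by
    intro i hi hik hia
    rcases hik.lt_or_eq with hik | rfl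
    · refine hne_b (k - i) (by omega) (by omega) ?_
      rw [← hkb, ← hia, ← mul_apply, ← pow_add, Nat.sub_add_cancel hik.le, hia]
    · exact hab (hia.symm.trans hkb)
  -- the arc from `f a` to `b` is a cycle of `f * swap a b` avoiding `a`
  let S : Set α := {z | ∃ i, 0 < i ∧ i ≤ k ∧ (f ^ i) a = z}
  have hS : Set.MapsTo (f * swap a b) S S := by
    rintro _ ⟨i, hi, hik, rfl⟩
    rcases hik.lt_or_eq with hik | rfl
    · refine ⟨i + 1, by omega, hik, ?_⟩
      rw [mul_apply, swap_apply_of_ne_of_ne (hne_a i hi hik.le) (hne_b i hi hik), pow_succ',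
        mul_apply]
    · exact ⟨1, one_pos, hk, by simp [hkb]⟩
  intro hg
  obtain ⟨m, hm⟩ := hg.symm.exists_nat_pow_eq
  obtain ⟨i, hi, hik, hia⟩ := hS.perm_pow m ⟨k, hk, le_rfl, hkb⟩
  exact hne_a i hi hik (hia.trans hm)

theorem sameCycle_mul_swap_of_not_sameCycle (h : ¬ f.SameCycle a b) :
    (f * swap a b).SameCycle a b := by
  by_contra hg
  have hfb : ∀ k, (f * swap a b).SameCycle a ((f ^ (k + 1)) b) := by
    intro k
    induction k with
    | zero => simpa using (sameCycle_apply_right.2 (SameCycle.refl (f * swap a b) a))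
    | succ k ih =>
      have hb : (f ^ (k + 1)) b ≠ b := fun hk => hg (by rwa [hk] at ih)
      have ha : (f ^ (k + 1)) b ≠ a := fun hk => h (hk ▸ sameCycle_pow_left.2 .rfl)
      have hstep : (f ^ (k + 1 + 1)) b = (f * swap a b) ((f ^ (k + 1)) b) := by
        rw [mul_apply, swap_apply_of_ne_of_ne ha hb, pow_succ' f (k + 1), mul_apply]
      exact hstep ▸ sameCycle_apply_right.2 ih
  have hord := hfb (orderOf f - 1)
  rw [Nat.sub_add_cancel (orderOf_pos f), pow_orderOf_eq_one, one_apply] at hord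
  exact hg hord

theorem orbCountOf_mul_swap_of_sameCycle (hab : a ≠ b) (h : f.SameCycle a b) :
    orbCountOf (f * swap a b) = orbCountOf f + 1 := by
  set g := f * swap a b
  have hga : g a = f b := by simp [g]
  have hgb : g b = f a := by simp [g]
  have hg : ∀ z, z ≠ a → z ≠ b → g z = f z := fun z hza hzb => by
    simp [g, swap_apply_of_ne_of_ne hza hzb]
  rw [orbCountOf_eq_card_quotient, orbCountOf_eq_card_quotient]
  refine Setoid.card_quotient_eq_add_one (a := a) (b := b)
    (fun _ _ hxy => hxy.of_forall_sameCycle_apply fun z _ => h.sameCycle_mul_swap_apply z)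
    (not_sameCycle_mul_swap hab h) h (fun x hx => ?_) (fun x y hax hxy => ?_)
  · obtain ⟨k, rfl⟩ := hx.exists_nat_pow_eq
    clear hx
    induction k with
    | zero => exact .inl .rfl
    | succ k ih =>
      rw [pow_succ', mul_apply]
      set z := (f ^ k) a
      by_cases hza : z = a
      · rw [hza, ← hgb]
        exact .inr (sameCycle_apply_right.2 .rfl)
      by_cases hzb : z = b
      · rw [hzb, ← hga]
        exact .inl (sameCycle_apply_right.2 .rfl)
      rw [← hg z hza hzb]
      exact ih.imp sameCycle_apply_right.2 sameCycle_apply_right.2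
  · refine SameCycle.of_forall_sameCycle_apply (fun z hz => ?_) hxy
    have hza : z ≠ a := by rintro rfl; exact hax hz.symm
    have hzb : z ≠ b := by rintro rfl; exact hax (h.trans hz.symm)
    rw [← hg z hza hzb]
    exact sameCycle_apply_right.2 .rfl

theorem orbCountOf_mul_swap_of_not_sameCycle (hab : a ≠ b) (h : ¬ f.SameCycle a b) :
    orbCountOf (f * swap a b) + 1 = orbCountOf f := by
  have := orbCountOf_mul_swap_of_sameCycle hab (sameCycle_mul_swap_of_not_sameCycle h)
  rwa [mul_swap_mul_self, eq_comm] at this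

end Equiv.Perm

namespace RibbonGraph

open Equiv.Perm

variable {n : ℕ} (Γ : RibbonGraph n)

@[simp]
theorem σ1_σ1 (i : Fin (2 * n)) : Γ.σ1 (Γ.σ1 i) = i := by
  simpa using congrArg (· i) Γ.invol

variable {Γ} {A : Finset (Fin (2 * n))} {e : Fin (2 * n)}

theorem Closed.σ1_mem_iff (hA : Γ.Closed A) {i : Fin (2 * n)} : Γ.σ1 i ∈ A ↔ i ∈ A :=
  ⟨fun h => by simpa using hA _ h, hA i⟩

theorem bdryMap_bijective (hA : Γ.Closed A) : Function.Bijective (Γ.bdryMap A) := by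
  have hτ : Function.Involutive fun i => if i ∈ A then Γ.σ1 i else i := by
    intro i
    by_cases hi : i ∈ A
    · simp [hi, hA i hi]
    · simp [hi]
  have : Γ.bdryMap A = Γ.σ0 ∘ fun i => if i ∈ A then Γ.σ1 i else i := by
    funext i
    by_cases hi : i ∈ A <;> simp [bdryMap, hi]
  rw [this]
  exact Γ.σ0.bijective.comp hτ.bijective

variable (Γ) in
noncomputable def bdryPerm (A : Finset (Fin (2 * n))) (hA : Γ.Closed A) : Perm (Fin (2 * n)) :=
  Equiv.ofBijective _ (bdryMap_bijective hA)

@[simp]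
theorem coe_bdryPerm (hA : Γ.Closed A) : ⇑(Γ.bdryPerm A hA) = Γ.bdryMap A := rfl

theorem faces_eq_orbCountOf (hA : Γ.Closed A) : Γ.faces A = orbCountOf (Γ.bdryPerm A hA) := rfl

theorem bdryMap_union_edge (hA : Γ.Closed A) (he : e ∉ A) :
    Γ.bdryMap (A ∪ {e, Γ.σ1 e}) = Γ.bdryMap A ∘ swap e (Γ.σ1 e) := by
  have he' : Γ.σ1 e ∉ A := hA.σ1_mem_iff.not.2 he
  funext x
  by_cases hxe : x = e
  · subst hxe; simp [bdryMap, he']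
  by_cases hxe' : x = Γ.σ1 e
  · subst hxe'; simp [bdryMap, he]
  simp [bdryMap, hxe, hxe', swap_apply_of_ne_of_ne hxe hxe']

variable {ρ : Fin (2 * n) → Option Bool} {b : Bool} {x y : Fin (2 * n)}

theorem mem_hset : x ∈ Γ.Hset ρ ↔ ρ x = some true := by
  simp [Hset]

theorem closed_hset (hρ : Γ.EdgeConst ρ) : Γ.Closed (Γ.Hset ρ) := fun i hi => by
  rwa [mem_hset, hρ, ← mem_hset]

@[simp]
theorem resolveEdge_self : Γ.resolveEdge ρ e b e = some b := by simp [resolveEdge]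

@[simp]
theorem resolveEdge_σ1 : Γ.resolveEdge ρ e b (Γ.σ1 e) = some b := by simp [resolveEdge]

theorem resolveEdge_of_ne (hxe : x ≠ e) (hxe' : x ≠ Γ.σ1 e) : Γ.resolveEdge ρ e b x = ρ x := by
  simp [resolveEdge, hxe, hxe']

theorem EdgeConst.resolveEdge (hρ : Γ.EdgeConst ρ) (e : Fin (2 * n)) (b : Bool) :
    Γ.EdgeConst (Γ.resolveEdge ρ e b) := by
  intro i
  by_cases hie : i = e
  · simp [hie]
  by_cases hie' : i = Γ.σ1 e
  · simp [hie']
  have hie₁ : Γ.σ1 i ≠ e := fun h => hie' (by rw [← h, σ1_σ1])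
  have hie₁' : Γ.σ1 i ≠ Γ.σ1 e := fun h => hie (Γ.σ1.injective h)
  rw [resolveEdge_of_ne hie₁ hie₁', resolveEdge_of_ne hie hie', hρ]

theorem hset_resolveEdge_false (hρ : Γ.EdgeConst ρ) (he : ρ e = none) :
    Γ.Hset (Γ.resolveEdge ρ e false) = Γ.Hset ρ := by
  ext x
  by_cases hxe : x = e
  · simp [mem_hset, hxe, he]
  by_cases hxe' : x = Γ.σ1 e
  · simp [mem_hset, hxe', hρ e, he]
  rw [mem_hset, mem_hset, resolveEdge_of_ne hxe hxe']

theorem hset_resolveEdge_true :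
    Γ.Hset (Γ.resolveEdge ρ e true) = Γ.Hset ρ ∪ {e, Γ.σ1 e} := by
  ext x
  by_cases hxe : x = e
  · simp [mem_hset, hxe]
  by_cases hxe' : x = Γ.σ1 e
  · simp [mem_hset, hxe']
  simp [mem_hset, hxe, hxe', resolveEdge_of_ne hxe hxe']

noncomputable abbrev curvePerm (hρ : Γ.EdgeConst ρ) : Perm (Fin (2 * n)) :=
  Γ.bdryPerm (Γ.Hset ρ) (closed_hset hρ)

theorem faces_hset (hρ : Γ.EdgeConst ρ) : Γ.faces (Γ.Hset ρ) = orbCountOf (Γ.curvePerm hρ) :=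
  rfl

theorem curvePerm_resolveEdge_true (hρ : Γ.EdgeConst ρ) (he : ρ e = none) :
    Γ.curvePerm (hρ.resolveEdge e true) = Γ.curvePerm hρ * swap e (Γ.σ1 e) := by
  have he' : e ∉ Γ.Hset ρ := by simp [mem_hset, he]
  ext x
  simp only [coe_bdryPerm, Perm.mul_apply]
  rw [hset_resolveEdge_true, bdryMap_union_edge (closed_hset hρ) he', Function.comp_apply]

theorem faces_resolveEdge_true_of_sameCycle (hρ : Γ.EdgeConst ρ) (he : ρ e = none)
    (hr : (Γ.curvePerm hρ).SameCycle e (Γ.σ1 e)) :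
    Γ.faces (Γ.Hset (Γ.resolveEdge ρ e true)) = Γ.faces (Γ.Hset ρ) + 1 := by
  rw [faces_hset (hρ.resolveEdge e true), faces_hset hρ, curvePerm_resolveEdge_true hρ he]
  exact orbCountOf_mul_swap_of_sameCycle (Γ.fixfree e).symm hr

theorem faces_resolveEdge_true_of_not_sameCycle (hρ : Γ.EdgeConst ρ) (he : ρ e = none)
    (hr : ¬ (Γ.curvePerm hρ).SameCycle e (Γ.σ1 e)) :
    Γ.faces (Γ.Hset (Γ.resolveEdge ρ e true)) + 1 = Γ.faces (Γ.Hset ρ) := by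
  rw [faces_hset (hρ.resolveEdge e true), faces_hset hρ, curvePerm_resolveEdge_true hρ he]
  exact orbCountOf_mul_swap_of_not_sameCycle (Γ.fixfree e).symm hr

variable (Γ) in
/-- `x` and `y` lie in the same component of `Γ(ρ)`. -/
abbrev Linked (ρ : Fin (2 * n) → Option Bool) : Fin (2 * n) → Fin (2 * n) → Prop :=
  Relation.EqvGen fun x y => y = Γ.bdryMap (Γ.Hset ρ) x ∨ (ρ x = none ∧ y = Γ.σ1 x)

theorem Linked.symm (h : Γ.Linked ρ x y) : Γ.Linked ρ y x := Relation.EqvGen.symm _ _ h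

theorem Linked.trans {z : Fin (2 * n)} (h : Γ.Linked ρ x y) (h' : Γ.Linked ρ y z) :
    Γ.Linked ρ x z := Relation.EqvGen.trans _ _ _ h h'

theorem linked_bdryMap (x : Fin (2 * n)) : Γ.Linked ρ x (Γ.bdryMap (Γ.Hset ρ) x) :=
  .rel _ _ (.inl rfl)

theorem linked_σ1 (hx : ρ x = none) : Γ.Linked ρ x (Γ.σ1 x) :=
  .rel _ _ (.inr ⟨hx, rfl⟩)

theorem linked_of_sameCycle {f : Perm (Fin (2 * n))} (hf : ∀ z, Γ.Linked ρ z (f z))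
    (h : f.SameCycle x y) : Γ.Linked ρ x y := by
  refine Relation.EqvGen.eqvGen_le (r' := Γ.Linked ρ) ?_ x y (eqvGen_apply_iff_sameCycle.2 h)
  rintro z _ rfl
  exact hf z

theorem GammaConn.of_linked {ρ' : Fin (2 * n) → Option Bool} (hc : Γ.GammaConn ρ)
    (hbdry : ∀ x, Γ.Linked ρ' x (Γ.bdryMap (Γ.Hset ρ) x))
    (hedge : ∀ x, ρ x = none → Γ.Linked ρ' x (Γ.σ1 x)) : Γ.GammaConn ρ' := fun i j => by
  refine Relation.EqvGen.eqvGen_le (r' := Γ.Linked ρ') ?_ i j (hc i j)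
  rintro x _ (rfl | ⟨hx, rfl⟩)
  exacts [hbdry x, hedge x hx]

theorem linked_σ1_resolveEdge (hee : Γ.Linked (Γ.resolveEdge ρ e b) e (Γ.σ1 e))
    (hx : ρ x = none) : Γ.Linked (Γ.resolveEdge ρ e b) x (Γ.σ1 x) := by
  by_cases hxe : x = e
  · rwa [hxe]
  by_cases hxe' : x = Γ.σ1 e
  · rw [hxe', σ1_σ1]
    exact hee.symm
  exact linked_σ1 (by rwa [resolveEdge_of_ne hxe hxe'])

theorem gammaConn_resolveEdge_false (hρ : Γ.EdgeConst ρ) (he : ρ e = none)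
    (hr : (Γ.curvePerm hρ).SameCycle e (Γ.σ1 e)) (hc : Γ.GammaConn ρ) :
    Γ.GammaConn (Γ.resolveEdge ρ e false) := by
  have hbdry : ∀ x, Γ.Linked (Γ.resolveEdge ρ e false) x (Γ.bdryMap (Γ.Hset ρ) x) :=
    fun x => hset_resolveEdge_false hρ he ▸ linked_bdryMap x
  exact hc.of_linked hbdry fun x hx => linked_σ1_resolveEdge (linked_of_sameCycle hbdry hr) hx

theorem gammaConn_resolveEdge_true (hρ : Γ.EdgeConst ρ) (he : ρ e = none)
    (hr : ¬ (Γ.curvePerm hρ).SameCycle e (Γ.σ1 e)) (hc : Γ.GammaConn ρ) :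
    Γ.GammaConn (Γ.resolveEdge ρ e true) := by
  have hlinked : ∀ {x y}, (Γ.curvePerm (hρ.resolveEdge e true)).SameCycle x y →
      Γ.Linked (Γ.resolveEdge ρ e true) x y :=
    linked_of_sameCycle fun z => linked_bdryMap z
  have hr' : (Γ.curvePerm (hρ.resolveEdge e true)).SameCycle e (Γ.σ1 e) := by
    rw [curvePerm_resolveEdge_true hρ he]
    exact sameCycle_mul_swap_of_not_sameCycle hr
  refine hc.of_linked (fun x => hlinked ?_) fun x hx => linked_σ1_resolveEdge (hlinked hr') hx
  have hx := hr'.sameCycle_mul_swap_apply x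
  rw [curvePerm_resolveEdge_true hρ he] at hx ⊢
  rwa [mul_swap_mul_self] at hx

theorem gammaConn_of_not_split (hρ : Γ.EdgeConst ρ) (hns : ¬ Γ.Split ρ) : Γ.GammaConn ρ := by
  simp only [Split, not_forall, not_lt] at hns
  obtain ⟨U, hUfree, hUc, hU⟩ := hns
  have hA : Γ.Closed (Γ.Hset ρ ∪ U) := by
    intro i hi
    rcases Finset.mem_union.1 hi with hi | hi
    · exact Finset.mem_union_left _ (closed_hset hρ i hi)
    · exact Finset.mem_union_right _ (hUc i hi)
  rw [faces_eq_orbCountOf hA, orbCountOf_le_one_iff] at hU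
  refine fun x y => linked_of_sameCycle (fun z => ?_) (hU x y)
  rw [coe_bdryPerm]
  by_cases hz : z ∈ U
  · have hσz : Γ.σ1 z ∉ Γ.Hset ρ := by simp [mem_hset, hρ z, hUfree z hz]
    have hstep : Γ.bdryMap (Γ.Hset ρ ∪ U) z = Γ.bdryMap (Γ.Hset ρ) (Γ.σ1 z) := by
      simp [bdryMap, hz, hσz]
    rw [hstep]
    exact (linked_σ1 (hUfree z hz)).trans (linked_bdryMap _)
  · have hstep : Γ.bdryMap (Γ.Hset ρ ∪ U) z = Γ.bdryMap (Γ.Hset ρ) z := by simp [bdryMap, hz]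
    rw [hstep]
    exact linked_bdryMap z

theorem resolveEdge_eq_none_iff :
    Γ.resolveEdge ρ e b x = none ↔ ρ x = none ∧ x ≠ e ∧ x ≠ Γ.σ1 e := by
  by_cases hxe : x = e
  · simp [hxe]
  by_cases hxe' : x = Γ.σ1 e
  · simp [hxe']
  simp [resolveEdge_of_ne hxe hxe', hxe, hxe']

theorem Split.resolveEdge (hρ : Γ.EdgeConst ρ) (he : ρ e = none) (hs : Γ.Split ρ) (b : Bool) :
    Γ.Split (Γ.resolveEdge ρ e b) := by
  intro U hUfree hUc
  have hUfree' : ∀ i ∈ U, ρ i = none := fun i hi => (resolveEdge_eq_none_iff.1 (hUfree i hi)).1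
  cases b
  · rw [hset_resolveEdge_false hρ he]
    exact hs U hUfree' hUc
  · rw [hset_resolveEdge_true, Finset.union_assoc]
    refine hs _ (fun i hi => ?_) (fun i hi => ?_)
    all_goals
      simp only [Finset.mem_union, Finset.mem_insert, Finset.mem_singleton] at hi ⊢
      rcases hi with (rfl | rfl) | hi
    · exact he
    · rwa [hρ]
    · exact hUfree' i hi
    · simp
    · simp
    · exact .inr (hUc i hi)

theorem card_unresolved_resolveEdge_lt (he : ρ e = none) (b : Bool) :
    (Finset.univ.filter fun i => Γ.resolveEdge ρ e b i = none).card <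
      (Finset.univ.filter fun i => ρ i = none).card := by
  refine Finset.card_lt_card
    ((Finset.ssubset_iff_of_subset fun i => ?_).2 ⟨e, by simp [he], by simp⟩)
  simp only [Finset.mem_filter, Finset.mem_univ, true_and, resolveEdge_eq_none_iff]
  exact And.left

theorem not_split_of_gammaConn {ρ : Fin (2 * n) → Option Bool} (hρ : Γ.EdgeConst ρ)
    (hc : Γ.GammaConn ρ) : ¬ Γ.Split ρ := by
  by_cases hfree : ∃ e, ρ e = none
  · obtain ⟨e, he⟩ := hfree
    by_cases hr : (Γ.curvePerm hρ).SameCycle e (Γ.σ1 e)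
    · exact fun hs => not_split_of_gammaConn (hρ.resolveEdge e false)
        (gammaConn_resolveEdge_false hρ he hr hc) (hs.resolveEdge hρ he false)
    · exact fun hs => not_split_of_gammaConn (hρ.resolveEdge e true)
        (gammaConn_resolveEdge_true hρ he hr hc) (hs.resolveEdge hρ he true)
  · intro hs
    have hH := hs ∅ (by simp) (by simp)
    rw [Finset.union_empty, faces_hset hρ] at hH
    refine hH.not_ge (orbCountOf_le_one_iff.2 fun x y => ?_)
    refine Setoid.eqvGen_le (s := SameCycle.setoid _) ?_ (hc x y)
    rintro z _ (rfl | ⟨hz, -⟩)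
    · exact sameCycle_apply_right.2 .rfl
    · exact absurd ⟨z, hz⟩ hfree
termination_by (Finset.univ.filter fun i => ρ i = none).card
decreasing_by all_goals exact card_unresolved_resolveEdge_lt he _

theorem split_iff_not_gammaConn (hρ : Γ.EdgeConst ρ) : Γ.Split ρ ↔ ¬ Γ.GammaConn ρ :=
  ⟨fun hs hc => not_split_of_gammaConn hρ hc hs,
    fun h => by_contra fun hns => h (gammaConn_of_not_split hρ hns)⟩

end RibbonGraph

theorem stmt13_general {n : ℕ} (Γ : RibbonGraph n)
    (ρ : Fin (2 * n) → Option Bool) (hρ : Γ.EdgeConst ρ)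
    (hns : ¬ Γ.Split ρ) (e : Fin (2 * n)) (he : ρ e = none) :
    (Γ.Nugatory ρ e ↔
      (¬ Γ.GammaConn (Γ.resolveEdge ρ e false) ∨ ¬ Γ.GammaConn (Γ.resolveEdge ρ e true))) ∧
    (¬ Γ.GammaConn (Γ.resolveEdge ρ e false) →
      Γ.faces (Γ.Hset (Γ.resolveEdge ρ e true)) + 1 = Γ.faces (Γ.Hset ρ) ∧
      Γ.faces (Γ.Hset (Γ.resolveEdge ρ e false)) = Γ.faces (Γ.Hset ρ)) ∧
    (¬ Γ.GammaConn (Γ.resolveEdge ρ e true) →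
      Γ.faces (Γ.Hset (Γ.resolveEdge ρ e false)) = Γ.faces (Γ.Hset ρ) ∧
      Γ.faces (Γ.Hset (Γ.resolveEdge ρ e true)) = Γ.faces (Γ.Hset ρ) + 1) := by
  have hc := RibbonGraph.gammaConn_of_not_split hρ hns
  have hf0 : Γ.faces (Γ.Hset (Γ.resolveEdge ρ e false)) = Γ.faces (Γ.Hset ρ) := by
    rw [RibbonGraph.hset_resolveEdge_false hρ he]
  refine ⟨by rw [RibbonGraph.Nugatory, RibbonGraph.split_iff_not_gammaConn (hρ.resolveEdge e false),
    RibbonGraph.split_iff_not_gammaConn (hρ.resolveEdge e true)], fun h0 => ?_, fun h1 => ?_⟩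
  · by_cases hr : (Γ.curvePerm hρ).SameCycle e (Γ.σ1 e)
    · exact absurd (RibbonGraph.gammaConn_resolveEdge_false hρ he hr hc) h0
    · exact ⟨RibbonGraph.faces_resolveEdge_true_of_not_sameCycle hρ he hr, hf0⟩
  · by_cases hr : (Γ.curvePerm hρ).SameCycle e (Γ.σ1 e)
    · exact ⟨hf0, RibbonGraph.faces_resolveEdge_true_of_sameCycle hρ he hr⟩
    · exact absurd (RibbonGraph.gammaConn_resolveEdge_true hρ he hr hc) h1

/-- Let `ρ` be a non-split partial resolution and `e` an unresolved
edge.  Then `e` is nugatory iff `Γ₀(ρ,e)` or `Γ₁(ρ,e)` is disconnected; if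
`Γ₀(ρ,e)` is disconnected then `|γ_ρ₁| = |γ_ρ| - 1` and `|γ_ρ₀| = |γ_ρ|`, while if
`Γ₁(ρ,e)` is disconnected then `|γ_ρ₀| = |γ_ρ|` and `|γ_ρ₁| = |γ_ρ| + 1`. -/
theorem stmt13 {n : ℕ} (Γ : RibbonGraph n) (hΓ : Γ.Connected)
    (ρ : Fin (2 * n) → Option Bool) (hρ : Γ.EdgeConst ρ)
    (hns : ¬ Γ.Split ρ) (e : Fin (2 * n)) (he : ρ e = none) :
    (Γ.Nugatory ρ e ↔
      (¬ Γ.GammaConn (Γ.resolveEdge ρ e false) ∨ ¬ Γ.GammaConn (Γ.resolveEdge ρ e true))) ∧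
    (¬ Γ.GammaConn (Γ.resolveEdge ρ e false) →
      Γ.faces (Γ.Hset (Γ.resolveEdge ρ e true)) + 1 = Γ.faces (Γ.Hset ρ) ∧
      Γ.faces (Γ.Hset (Γ.resolveEdge ρ e false)) = Γ.faces (Γ.Hset ρ)) ∧
    (¬ Γ.GammaConn (Γ.resolveEdge ρ e true) →
      Γ.faces (Γ.Hset (Γ.resolveEdge ρ e false)) = Γ.faces (Γ.Hset ρ) ∧
      Γ.faces (Γ.Hset (Γ.resolveEdge ρ e true)) = Γ.faces (Γ.Hset ρ) + 1) :=
  stmt13_general Γ ρ hρ hns e he
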